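/- arXiv:2302.07604 — 7 statements merged into one kernel-verified Lean document; each statement's English description precedes it below -/
import Mathlib

section
/- Let H be a finite-dimensional commutative semisimple ℂ-algebra with basis B = {x_1, ..., x_m}, x_1 = 1, equipped with an involution * on B such that the coefficient of 1 in x_i x_j is nonzero iff j = i*, with positive value 1/h_i when j = i*. Let μ_1, ..., μ_m be the distinct algebra homomorphisms H → ℂ, satisfying μ_j(x_{i*}) = conj(μ_j(x_i)). Then the first orthogonality relation holds: ∑_{i=1}^m h_i μ_j(x_i) μ_k(x_{i*}) = δ_{j,k} n_j, where the n_j are defined by τ = ∑_j (1/n_j) μ_j with τ the functional sending x_i to δ_{i,1}; moreover each n_j is a positive real number. -/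
open scoped BigOperators ComplexConjugate

/-!
The characters give a change of basis. Expanding `μ_j(x_a) μ_j(x_b)` through the structure
constants and applying `τ = ∑_j (1/n_j) μ_j` yields the second orthogonality relation
`∑_j (1/n_j) μ_j(x_a) μ_j(x_{b*}) = δ_{ab} / h_a`. In matrix form this says that the character
table `X` has a one-sided inverse built from `diag(1/n)`, `X` with `*` applied, and `diag(h)`;
a one-sided inverse of a square matrix is two-sided, and the other product is the first
orthogonality relation. On the diagonal it reads `n_j = ∑_i h_i |μ_j(x_i)|² ≥ 0`, and `n_j ≠ 0`.
-/

open Matrix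

namespace Matrix

variable {ι K : Type*} [Fintype ι] [DecidableEq ι] [Field K]

theorem mul_diagonal_mul_transpose_eq_diagonal_inv {X Y : Matrix ι ι K} {u w : ι → K}
    (hu : ∀ j, u j ≠ 0) (hw : ∀ i, w i ≠ 0) (h : Xᵀ * diagonal u * Y = diagonal w⁻¹) :
    X * diagonal w * Yᵀ = diagonal u⁻¹ := by
  have hright : Xᵀ * (diagonal u * Y * diagonal w) = 1 := by
    rw [← Matrix.mul_assoc, ← Matrix.mul_assoc, h, diagonal_mul_diagonal,
      show (fun i => w⁻¹ i * w i) = 1 from funext fun i => inv_mul_cancel₀ (hw i),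
      diagonal_one']
  have hleft : diagonal u * (Y * diagonal w * Xᵀ) = 1 := by
    simpa only [Matrix.mul_assoc] using mul_eq_one_comm.mp hright
  have hYX : Y * diagonal w * Xᵀ = diagonal u⁻¹ := by
    calc Y * diagonal w * Xᵀ = diagonal u⁻¹ * (diagonal u * (Y * diagonal w * Xᵀ)) := by
          rw [← Matrix.mul_assoc, diagonal_mul_diagonal,
            show (fun j => u⁻¹ j * u j) = 1 from funext fun j => inv_mul_cancel₀ (hu j),
            diagonal_one', Matrix.one_mul]
      _ = diagonal u⁻¹ := by rw [hleft, Matrix.mul_one]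
  simpa [transpose_mul, Matrix.mul_assoc] using congrArg transpose hYX

end Matrix

section Orthogonality

variable {ι κ K : Type*} [Fintype ι] [Fintype κ] [DecidableEq κ] [Field K]

theorem sum_mul_mul_eq_ite_of_sum_mul_mul_eq_ite [DecidableEq ι] {X Y : ι → ι → K}
    {u w : ι → K} (hu : ∀ j, u j ≠ 0) (hw : ∀ i, w i ≠ 0)
    (h : ∀ i l, ∑ j, u j * X j i * Y j l = if i = l then (w i)⁻¹ else 0) (j k : ι) :
    ∑ i, w i * X j i * Y k i = if j = k then (u j)⁻¹ else 0 := by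
  have hmat : (of X)ᵀ * diagonal u * of Y = diagonal w⁻¹ := by
    ext i l
    rw [mul_apply]
    simp only [mul_diagonal, transpose_apply, of_apply, diagonal_apply, Pi.inv_apply]
    rw [← h i l]
    exact Finset.sum_congr rfl fun j _ => by ring
  have hentry := congrFun (congrFun (mul_diagonal_mul_transpose_eq_diagonal_inv hu hw hmat) j) k
  rw [mul_apply] at hentry
  simp only [mul_diagonal, transpose_apply, of_apply, diagonal_apply, Pi.inv_apply] at hentry
  rw [← hentry]
  exact Finset.sum_congr rfl fun i _ => by ring

/-- `τ(x_a x_b)`, computed through the characters and through the structure constants. -/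
theorem sum_mul_mul_eq_structConst (N : κ → κ → κ → K) (χ : ι → κ → K) (c : ι → K) (e : κ)
    (hmul : ∀ j a b, χ j a * χ j b = ∑ k, N a b k * χ j k)
    (hc : ∀ k, ∑ j, c j * χ j k = if k = e then 1 else 0) (a b : κ) :
    ∑ j, c j * χ j a * χ j b = N a b e := by
  calc ∑ j, c j * χ j a * χ j b = ∑ k, N a b k * ∑ j, c j * χ j k := by
        simp_rw [mul_assoc, hmul, Finset.mul_sum]
        rw [Finset.sum_comm]
        exact Finset.sum_congr rfl fun k _ => Finset.sum_congr rfl fun j _ => by ring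
    _ = N a b e := by simp [hc]

theorem sum_ofReal_mul_mul_conj (w : ι → ℝ) (z : ι → ℂ) :
    ∑ i, (w i : ℂ) * z i * conj (z i) = ((∑ i, w i * Complex.normSq (z i) : ℝ) : ℂ) := by
  push_cast
  simp only [mul_assoc, Complex.mul_conj]

end Orthogonality

theorem hypergroup_first_orthogonality_general {m : ℕ} [NeZero m]
    (N : Fin m → Fin m → Fin m → ℂ) (st : Fin m → Fin m)
    (h : Fin m → ℝ) (μ : Fin m → Fin m → ℂ) (n : Fin m → ℂ)
    -- involution on the basis
    (hst : ∀ i, st (st i) = i)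
    -- the coefficient of 1 in x_i x_j is 1/h_i > 0 if j = i*, and 0 otherwise
    (hpos : ∀ i, 0 < h i)
    (hN1 : ∀ i, N i (st i) 0 = (((h i)⁻¹ : ℝ) : ℂ))
    (hN0 : ∀ i j, j ≠ st i → N i j 0 = 0)
    -- μ_1, ..., μ_m are the distinct algebra homomorphisms H → ℂ
    (hμmul : ∀ j a b, μ j a * μ j b = ∑ k, N a b k * μ j k)
    -- μ_j(x_{i*}) = conj(μ_j(x_i))
    (hconj : ∀ j i, μ j (st i) = conj (μ j i))
    -- formal codegrees: τ = ∑_j (1/n_j) μ_j where τ(x_i) = δ_{i,1}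
    (hn : ∀ j, n j ≠ 0)
    (hτ : ∀ i, ∑ j, (n j)⁻¹ * μ j i = if i = 0 then 1 else 0) :
    (∀ j k, ∑ i, (h i : ℂ) * μ j i * μ k (st i) = if j = k then n j else 0) ∧
    (∀ j, ∃ r : ℝ, 0 < r ∧ n j = (r : ℂ)) := by
  have hcoeff : ∀ i l, N i (st l) 0 = if i = l then (h i : ℂ)⁻¹ else 0 := by
    intro i l
    split_ifs with hil
    · rw [hil, hN1, Complex.ofReal_inv]
    · exact hN0 i (st l) ((Function.LeftInverse.injective hst).ne (Ne.symm hil))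
  have second : ∀ i l, ∑ j, (n j)⁻¹ * μ j i * μ j (st l) = if i = l then (h i : ℂ)⁻¹ else 0 :=
    fun i l => (sum_mul_mul_eq_structConst N μ _ 0 hμmul hτ i (st l)).trans (hcoeff i l)
  have first := sum_mul_mul_eq_ite_of_sum_mul_mul_eq_ite (Y := fun k i => μ k (st i))
    (fun j => inv_ne_zero (hn j)) (fun i => Complex.ofReal_ne_zero.mpr (hpos i).ne') second
  simp only [inv_inv] at first
  refine ⟨first, fun j => ?_⟩
  have hnj : n j = ((∑ i, h i * Complex.normSq (μ j i) : ℝ) : ℂ) := by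
    simpa only [↓reduceIte, hconj, sum_ofReal_mul_mul_conj] using (first j j).symm
  refine ⟨_, lt_of_le_of_ne (Finset.sum_nonneg fun i _ => ?_) fun hzero => hn j ?_, hnj⟩
  · exact mul_nonneg (hpos i).le (Complex.normSq_nonneg _)
  · rw [hnj, ← hzero, Complex.ofReal_zero]

/-- first orthogonality relation for abelian hypergroups, and
positivity of the formal codegrees. The hypergroup is encoded by its structure
constants `N`, involution `st` on the basis, orders `h i = 1/N_{i,i*}^1`,
its complete family of distinct characters `μ`, and formal codegrees `n`
defined via `τ = ∑_j (1/n_j) μ_j`. -/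
theorem hypergroup_first_orthogonality {m : ℕ} [NeZero m]
    (N : Fin m → Fin m → Fin m → ℂ) (st : Fin m → Fin m)
    (h : Fin m → ℝ) (μ : Fin m → Fin m → ℂ) (n : Fin m → ℂ)
    -- H is a commutative associative unital algebra with basis x_1 = 1, ..., x_m
    (hcomm : ∀ i j k, N i j k = N j i k)
    (hassoc : ∀ i j k l, ∑ p, N i j p * N p k l = ∑ q, N j k q * N i q l)
    (hunit : ∀ i k, N 0 i k = if k = i then 1 else 0)
    -- involution on the basis
    (hst : ∀ i, st (st i) = i)
    -- the coefficient of 1 in x_i x_j is 1/h_i > 0 if j = i*, and 0 otherwise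
    (hpos : ∀ i, 0 < h i)
    (hN1 : ∀ i, N i (st i) 0 = (((h i)⁻¹ : ℝ) : ℂ))
    (hN0 : ∀ i j, j ≠ st i → N i j 0 = 0)
    -- μ_1, ..., μ_m are the distinct algebra homomorphisms H → ℂ
    (hμ1 : ∀ j, μ j 0 = 1)
    (hμmul : ∀ j a b, μ j a * μ j b = ∑ k, N a b k * μ j k)
    (hμinj : Function.Injective μ)
    (hμcomplete : ∀ f : Fin m → ℂ, f 0 = 1 →
      (∀ a b, f a * f b = ∑ k, N a b k * f k) → ∃ j, f = μ j)
    -- μ_j(x_{i*}) = conj(μ_j(x_i))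
    (hconj : ∀ j i, μ j (st i) = conj (μ j i))
    -- formal codegrees: τ = ∑_j (1/n_j) μ_j where τ(x_i) = δ_{i,1}
    (hn : ∀ j, n j ≠ 0)
    (hτ : ∀ i, ∑ j, (n j)⁻¹ * μ j i = if i = 0 then 1 else 0) :
    (∀ j k, ∑ i, (h i : ℂ) * μ j i * μ k (st i) = if j = k then n j else 0) ∧
    (∀ j, ∃ r : ℝ, 0 < r ∧ n j = (r : ℂ)) :=
  hypergroup_first_orthogonality_general N st h μ n hst hpos hN1 hN0 hμmul hconj hn hτ
end

section
/- Let (H, B) be a normalized hypergroup (all structure constants N_{ab}^c sum to 1 over c for fixed a, b), with B = {x_1, ..., x_m}, x_1 = 1, and let μ_1 : H → ℂ be the augmentation map sending every basis element to 1. Then the primitive central idempotent F_1 corresponding to μ_1 is F_1 = (1/n(H)) ∑_{i=1}^m h_{i*} x_i, where h_i := 1/N_{i,i*}^1 and n(H) := ∑_{i=1}^m h_i. -/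
/-!
Compare the coefficients of the unit in `x_l F_1 = F_1`: since `N_{l i}^1` vanishes unless
`i = l*`, this reads `F_{l*} / h_l = F_1`, so the coefficients of `F_1` are proportional to
`h_{i*}`; the normalization `μ_1(F_1) = ∑ F_i = 1` then fixes the factor to be `1 / n(H)`,
because `i ↦ i*` permutes the basis.
-/

section HypergroupIdempotent

variable {ι : Type*} [Fintype ι] {N : ι → ι → ι → ℂ} {st : ι → ι} {h : ι → ℝ} {F : ι → ℂ}

theorem sum_mul_structConst_unit (o : ι)
    (hN1 : ∀ i, N i (st i) o = (((h i)⁻¹ : ℝ) : ℂ)) (hN0 : ∀ i j, j ≠ st i → N i j o = 0)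
    (l : ι) : ∑ i, F i * N l i o = F (st l) * (((h l)⁻¹ : ℝ) : ℂ) := by
  rw [Fintype.sum_eq_single (st l) fun j hj => by rw [hN0 l j hj, mul_zero], hN1]

theorem coeff_eq_unit_coeff_mul (o : ι) (hst : Function.Involutive st) (hne : ∀ i, h i ≠ 0)
    (hN1 : ∀ i, N i (st i) o = (((h i)⁻¹ : ℝ) : ℂ)) (hN0 : ∀ i j, j ≠ st i → N i j o = 0)
    (hFl : ∀ l, ∑ i, F i * N l i o = F o) (i : ι) : F i = F o * h (st i) := by
  have hunit := hFl (st i)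
  rw [sum_mul_structConst_unit o hN1 hN0, hst i] at hunit
  have hne' : ((h (st i) : ℝ) : ℂ) ≠ 0 := Complex.ofReal_ne_zero.mpr (hne (st i))
  rw [← hunit, Complex.ofReal_inv, mul_assoc, inv_mul_cancel₀ hne', mul_one]

theorem unit_coeff_eq_inv_sum (o : ι) (hst : Function.Involutive st)
    (hprop : ∀ i, F i = F o * h (st i)) (hFsum : ∑ i, F i = 1) :
    F o = (((∑ i, h i : ℝ) : ℂ))⁻¹ := by
  refine eq_inv_of_mul_eq_one_left ?_
  calc F o * ((∑ i, h i : ℝ) : ℂ) = F o * ((∑ i, h (st i) : ℝ) : ℂ) := by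
        rw [← Equiv.sum_comp hst.toPerm h, Function.Involutive.coe_toPerm]
    _ = ∑ i, F i := by
        rw [Complex.ofReal_sum, Finset.mul_sum]
        exact Fintype.sum_congr _ _ fun i => (hprop i).symm
    _ = 1 := hFsum

end HypergroupIdempotent

theorem normalized_hypergroup_augmentation_idempotent_general {m : ℕ} [NeZero m]
    (N : Fin m → Fin m → Fin m → ℂ) (st : Fin m → Fin m)
    (h : Fin m → ℝ) (F : Fin m → ℂ)
    (hst : ∀ i, st (st i) = i)
    (hpos : ∀ i, 0 < h i)
    (hN1 : ∀ i, N i (st i) 0 = (((h i)⁻¹ : ℝ) : ℂ))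
    (hN0 : ∀ i j, j ≠ st i → N i j 0 = 0)
    -- F = F_1: x_l F = F and F x_l = F for all basis elements x_l, and μ_1(F) = 1
    (hFl : ∀ l k, ∑ i, F i * N l i k = F k)
    (hFsum : ∑ i, F i = 1) :
    ∀ i, F i = (((h (st i)) / (∑ i', h i') : ℝ) : ℂ) := by
  have hprop : ∀ i, F i = F 0 * h (st i) :=
    coeff_eq_unit_coeff_mul 0 hst (fun i => (hpos i).ne') hN1 hN0 fun l => hFl l 0
  intro i
  rw [hprop i, unit_coeff_eq_inv_sum 0 hst hprop hFsum, Complex.ofReal_div]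
  exact inv_mul_eq_div _ _

/-- for a normalized hypergroup (not necessarily abelian), the
primitive central idempotent `F_1` corresponding to the augmentation character
is `F_1 = (1/n(H)) ∑_i h_{i*} x_i`, where `n(H) = ∑_i h_i`. The idempotent is
characterized by `x F_1 = μ_1(x) F_1 = F_1` (on basis elements, both sides)
together with `μ_1(F_1) = 1`, i.e. `∑_i F_i = 1`. -/
theorem normalized_hypergroup_augmentation_idempotent {m : ℕ} [NeZero m]
    (N : Fin m → Fin m → Fin m → ℂ) (st : Fin m → Fin m)
    (h : Fin m → ℝ) (F : Fin m → ℂ)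
    (hassoc : ∀ i j k l, ∑ p, N i j p * N p k l = ∑ q, N j k q * N i q l)
    (hunitL : ∀ i k, N 0 i k = if k = i then 1 else 0)
    (hunitR : ∀ i k, N i 0 k = if k = i then 1 else 0)
    (hst : ∀ i, st (st i) = i)
    (hpos : ∀ i, 0 < h i)
    (hN1 : ∀ i, N i (st i) 0 = (((h i)⁻¹ : ℝ) : ℂ))
    (hN0 : ∀ i j, j ≠ st i → N i j 0 = 0)
    -- normalized: ∑_c N_{ab}^c = 1
    (hnorm : ∀ a b, ∑ c, N a b c = 1)
    -- F = F_1: x_l F = F and F x_l = F for all basis elements x_l, and μ_1(F) = 1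
    (hFl : ∀ l k, ∑ i, F i * N l i k = F k)
    (hFr : ∀ l k, ∑ i, F i * N i l k = F k)
    (hFsum : ∑ i, F i = 1) :
    ∀ i, F i = (((h (st i)) / (∑ i', h i') : ℝ) : ℂ) :=
  normalized_hypergroup_augmentation_idempotent_general N st h F hst hpos hN1 hN0 hFl hFsum
end

section
/- Let (H, B) be a symmetric real-nonnegative hypergroup and x_i ∈ B a grouplike element. Then for any basis element x_j ∈ B, the product x_i x_j is a positive scalar multiple of a single basis element; more precisely x_i x_j = (d_i d_j / d_k) x_k for some x_k ∈ B, where d denotes FPdim. -/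
open scoped BigOperators

/-- A basis element `g` is grouplike if `h_g x_g x_{g*} = x_1`. -/
def IsGrouplike {m : ℕ} [NeZero m] (N : Fin m → Fin m → Fin m → ℝ)
    (st : Fin m → Fin m) (h : Fin m → ℝ) (g : Fin m) : Prop :=
  ∀ k, h g * N g (st g) k = if k = 0 then 1 else 0

/-!
If `x_a x_b = c x_1 = x_b x_a` with `c ≠ 0` and `x_a x_j` has a nonzero coefficient at `x_k`,
expanding `(x_b x_a) x_j = x_b (x_a x_j)` with nonnegative coefficients shows that `x_b x_k` is a
multiple of `x_j`, and then `(x_a x_b) x_k = x_a (x_b x_k)` shows that `x_a x_j` is a multiple of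
`x_k`; FPdim fixes the multiple. For a grouplike `x_i` we have `x_i x_{i*} = h_i⁻¹ x_1`, and also
`x_{i*} x_i = h_i⁻¹ x_1`: both products have FPdim `h_i⁻¹` and coefficient `h_i⁻¹` at `x_1`, so
the remaining nonnegative coefficients of `x_{i*} x_i` vanish.
-/

open Finset

theorem eq_zero_of_sum_mul_eq_mul {ι R : Type*} [Fintype ι] [Field R] [LinearOrder R]
    [IsStrictOrderedRing R] {c w : ι → R} (hc : ∀ q, 0 ≤ c q) (hw : ∀ q, 0 < w q) {p : ι}
    (hsum : ∑ q, c q * w q = c p * w p) {q : ι} (hq : q ≠ p) : c q = 0 := by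
  classical
  rw [← add_sum_erase _ _ (mem_univ p), add_eq_left] at hsum
  have := (sum_eq_zero_iff_of_nonneg fun q _ => mul_nonneg (hc q) (hw q).le).mp hsum q
    (by simp [hq])
  exact (mul_eq_zero.mp this).resolve_right (hw q).ne'

namespace StructureConstants

theorem sum_unit_mul {R : Type*} [NonAssocSemiring R] {m : ℕ} [NeZero m]
    {N : Fin m → Fin m → Fin m → R} (hunit : ∀ i k, N 0 i k = if k = i then 1 else 0) (c : R)
    (j l : Fin m) :
    ∑ p, (if p = 0 then c else 0) * N p j l = if l = j then c else 0 := by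
  simp [ite_mul, hunit]

variable {R : Type*} [Field R] {m : ℕ} {N : Fin m → Fin m → Fin m → R}

theorem eq_ite_of_forall_ne_eq_zero {d : Fin m → R}
    (hdmul : ∀ a b, d a * d b = ∑ k, N a b k * d k) {a b k : Fin m}
    (hdk : d k ≠ 0) (hk : ∀ l, l ≠ k → N a b l = 0) (l : Fin m) :
    N a b l = if l = k then d a * d b / d k else 0 := by
  split_ifs with hl
  · rw [hl, eq_div_iff hdk, hdmul, sum_eq_single k (fun q _ hq => by rw [hk q hq, zero_mul])
      (by simp)]
  · exact hk l hl

variable [LinearOrder R] [IsStrictOrderedRing R] [NeZero m]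

theorem mul_eq_unit_of_mul_eq_unit {d : Fin m → R} (hnneg : ∀ i j k, 0 ≤ N i j k)
    (hdpos : ∀ i, 0 < d i) (hdmul : ∀ a b, d a * d b = ∑ k, N a b k * d k) {a b : Fin m} {c : R}
    (hab : ∀ q, N a b q = if q = 0 then c else 0) (hba : N b a 0 = c) (q : Fin m) :
    N b a q = if q = 0 then c else 0 := by
  split_ifs with hq
  · rw [hq, hba]
  refine eq_zero_of_sum_mul_eq_mul (hnneg b a) hdpos ?_ hq
  rw [← hdmul, mul_comm, hdmul, hba]
  simp [hab, ite_mul]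

theorem exists_forall_ne_eq_zero_of_mul_eq_unit
    (hassoc : ∀ i j k l, ∑ p, N i j p * N p k l = ∑ q, N j k q * N i q l)
    (hunit : ∀ i k, N 0 i k = if k = i then 1 else 0) (hnneg : ∀ i j k, 0 ≤ N i j k)
    {a b : Fin m} {c : R} (hc : c ≠ 0)
    (hab : ∀ q, N a b q = if q = 0 then c else 0) (hba : ∀ q, N b a q = if q = 0 then c else 0)
    (j : Fin m) : ∃ k, ∀ l, l ≠ k → N a j l = 0 := by
  by_cases hzero : ∀ k, N a j k = 0
  · exact ⟨0, fun l _ => hzero l⟩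
  push Not at hzero
  obtain ⟨k, hk⟩ := hzero
  have hbk : ∀ l, l ≠ j → N b k l = 0 := by
    intro l hl
    have hsum := hassoc b a j l
    simp only [hba, sum_unit_mul hunit, if_neg hl] at hsum
    have := (sum_eq_zero_iff_of_nonneg fun q _ => mul_nonneg (hnneg a j q) (hnneg b q l)).mp
      hsum.symm k (mem_univ k)
    exact (mul_eq_zero.mp this).resolve_left hk
  have hkey : ∀ l, N b k j * N a j l = if l = k then c else 0 := by
    intro l
    have hsum := hassoc a b k l
    rwa [funext hab, sum_unit_mul hunit,
      sum_eq_single j (fun q _ hq => by rw [hbk q hq, zero_mul]) (by simp), eq_comm] at hsum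
  refine ⟨k, fun l hl => ?_⟩
  have hbkj : N b k j ≠ 0 := left_ne_zero_of_mul (by rw [hkey k, if_pos rfl]; exact hc)
  simpa [hl, hbkj] using hkey l

end StructureConstants

theorem IsGrouplike.ne_zero {m : ℕ} [NeZero m] {N : Fin m → Fin m → Fin m → ℝ}
    {st : Fin m → Fin m} {h : Fin m → ℝ} {g : Fin m} (hg : IsGrouplike N st h g) : h g ≠ 0 :=
  left_ne_zero_of_mul (b := N g (st g) 0) (by rw [hg 0, if_pos rfl]; exact one_ne_zero)

theorem IsGrouplike.mul_star {m : ℕ} [NeZero m] {N : Fin m → Fin m → Fin m → ℝ}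
    {st : Fin m → Fin m} {h : Fin m → ℝ} {g : Fin m} (hg : IsGrouplike N st h g) (q : Fin m) :
    N g (st g) q = if q = 0 then (h g)⁻¹ else 0 := by
  have hq := hg q
  split_ifs at hq ⊢
  · exact eq_inv_of_mul_eq_one_right hq
  · exact (mul_eq_zero.mp hq).resolve_left hg.ne_zero

open StructureConstants in
theorem grouplike_mul_basis_single_general {m : ℕ} [NeZero m]
    (N : Fin m → Fin m → Fin m → ℝ) (st : Fin m → Fin m)
    (h : Fin m → ℝ) (d : Fin m → ℝ)
    (hassoc : ∀ i j k l, ∑ p, N i j p * N p k l = ∑ q, N j k q * N i q l)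
    (hunit : ∀ i k, N 0 i k = if k = i then 1 else 0)
    (hnneg : ∀ i j k, 0 ≤ N i j k)
    (hsymm : ∀ i j, N i j 0 = N j i 0)
    (hN1 : ∀ i, N i (st i) 0 = (h i)⁻¹)
    (hdpos : ∀ i, 0 < d i)
    (hdmul : ∀ a b, d a * d b = ∑ k, N a b k * d k)
    (i : Fin m) (hi : IsGrouplike N st h i) :
    ∀ j, ∃ k, ∀ l, N i j l = if l = k then d i * d j / d k else 0 := by
  intro j
  have hstar_mul := mul_eq_unit_of_mul_eq_unit hnneg hdpos hdmul hi.mul_star (by rw [hsymm, hN1])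
  obtain ⟨k, hk⟩ := exists_forall_ne_eq_zero_of_mul_eq_unit hassoc hunit hnneg
    (inv_ne_zero hi.ne_zero) hi.mul_star hstar_mul j
  exact ⟨k, eq_ite_of_forall_ne_eq_zero hdmul (hdpos k).ne' hk⟩

/-- in a symmetric real-nonnegative hypergroup, if `x_i` is a
grouplike element then for any basis element `x_j` the product `x_i x_j` is a
positive scalar multiple of a single basis element:
`x_i x_j = (d_i d_j / d_k) x_k` for some `k`. -/
theorem grouplike_mul_basis_single {m : ℕ} [NeZero m]
    (N : Fin m → Fin m → Fin m → ℝ) (st : Fin m → Fin m)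
    (h : Fin m → ℝ) (d : Fin m → ℝ)
    (hassoc : ∀ i j k l, ∑ p, N i j p * N p k l = ∑ q, N j k q * N i q l)
    (hunit : ∀ i k, N 0 i k = if k = i then 1 else 0)
    (hst : ∀ i, st (st i) = i)
    (hnneg : ∀ i j k, 0 ≤ N i j k)
    (hsymm : ∀ i j, N i j 0 = N j i 0)
    (hpos : ∀ i, 0 < h i)
    (hN1 : ∀ i, N i (st i) 0 = (h i)⁻¹)
    (hN0 : ∀ i j, j ≠ st i → N i j 0 = 0)
    (hd0 : d 0 = 1)
    (hdpos : ∀ i, 0 < d i)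
    (hdmul : ∀ a b, d a * d b = ∑ k, N a b k * d k)
    (i : Fin m) (hi : IsGrouplike N st h i) :
    ∀ j, ∃ k, ∀ l, N i j l = if l = k then d i * d j / d k else 0 :=
  grouplike_mul_basis_single_general N st h d hassoc hunit hnneg hsymm hN1 hdpos hdmul i hi
end

section
/- Let (H, B) be an abelian real-nonnegative hypergroup and let μ_j : H → ℂ be a character such that μ_j(x_m) = d_m ω_m and μ_j(x_n) = d_n ω_n for complex numbers ω_m, ω_n of absolute value 1, where d_i = FPdim(x_i). Then for every basis element x_p appearing with positive coefficient in x_m x_n, one has μ_j(x_p) = ω_m ω_n d_p. -/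
open scoped BigOperators ComplexConjugate

/-!
Rotating by `conj (ω_a ω_b)`, the identity `μ(x_a) μ(x_b) = ∑ N_{ab}^k μ(x_k)` becomes
`∑ N_{ab}^k conj(ω) μ(x_k) = d_a d_b = ∑ N_{ab}^k d_k`. Comparing real parts, every term satisfies
`Re (conj(ω) μ(x_k)) ≤ |μ(x_k)| ≤ d_k` with nonnegative weight, so equality holds termwise
wherever `N_{ab}^k > 0`; a complex number of modulus at most `d_k` with real part `d_k` is `d_k`.
-/

namespace Complex

theorem eq_ofReal_of_norm_le_of_le_re {z : ℂ} {r : ℝ} (hnorm : ‖z‖ ≤ r) (hre : r ≤ z.re) :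
    z = r := by
  have hre_norm : z.re = ‖z‖ := le_antisymm (re_le_norm z) (hnorm.trans hre)
  have hr : z.re = r := le_antisymm (hre_norm ▸ hnorm) hre
  calc z = z.re := eq_re_of_ofReal_le (r := 0) (by exact_mod_cast re_eq_norm.1 hre_norm)
    _ = r := by rw [hr]

theorem eq_of_sum_eq_sum_of_norm_le {ι : Type*} {s : Finset ι} {w r : ι → ℝ} {z : ι → ℂ}
    (hw : ∀ i ∈ s, 0 ≤ w i) (hz : ∀ i ∈ s, ‖z i‖ ≤ r i)
    (hsum : ∑ i ∈ s, (w i : ℂ) * z i = ∑ i ∈ s, (w i : ℂ) * r i)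
    {p : ι} (hp : p ∈ s) (hwp : 0 < w p) : z p = r p := by
  have hre_le : ∀ i ∈ s, w i * (z i).re ≤ w i * r i := fun i hi =>
    mul_le_mul_of_nonneg_left ((re_le_norm _).trans (hz i hi)) (hw i hi)
  have hsum_re : ∑ i ∈ s, w i * (z i).re = ∑ i ∈ s, w i * r i := by
    simpa [re_sum, ← ofReal_mul] using congrArg re hsum
  have hp_re : w p * (z p).re = w p * r p :=
    (Finset.sum_eq_sum_iff_of_le hre_le).1 hsum_re p hp
  exact eq_ofReal_of_norm_le_of_le_re (hz p hp) (mul_left_cancel₀ hwp.ne' hp_re).ge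

theorem eq_mul_of_sum_eq_mul_sum_of_norm_le {ι : Type*} {s : Finset ι} {w r : ι → ℝ}
    {z : ι → ℂ} {ω : ℂ} (hω : ‖ω‖ = 1)
    (hw : ∀ i ∈ s, 0 ≤ w i) (hz : ∀ i ∈ s, ‖z i‖ ≤ r i)
    (hsum : ∑ i ∈ s, (w i : ℂ) * z i = ω * ∑ i ∈ s, (w i : ℂ) * r i)
    {p : ι} (hp : p ∈ s) (hwp : 0 < w p) : z p = ω * r p := by
  have hconj : conj ω * ω = 1 := by rw [conj_mul', hω]; norm_num
  have hrot : conj ω * z p = r p := by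
    refine eq_of_sum_eq_sum_of_norm_le (z := fun i => conj ω * z i) hw
      (fun i hi => by simpa [hω] using hz i hi) ?_ hp hwp
    calc ∑ i ∈ s, (w i : ℂ) * (conj ω * z i)
        = conj ω * ∑ i ∈ s, (w i : ℂ) * z i := by
          rw [Finset.mul_sum]; exact Finset.sum_congr rfl fun i _ => by ring
      _ = ∑ i ∈ s, (w i : ℂ) * r i := by rw [hsum, ← mul_assoc, hconj, one_mul]
  calc z p = ω * (conj ω * z p) := by rw [← mul_assoc, mul_comm ω, hconj, one_mul]
    _ = ω * r p := by rw [hrot]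

end Complex

theorem character_on_constituents_general {m : ℕ}
    (N : Fin m → Fin m → Fin m → ℝ)
    (d : Fin m → ℝ) (μ : Fin m → ℂ)
    (hnneg : ∀ i j k, 0 ≤ N i j k)
    -- FPdim, the character positive on the basis
    (hdmul : ∀ a b, d a * d b = ∑ k, N a b k * d k)
    -- μ is a character and satisfies the Frobenius–Perron bound |μ(x_i)| ≤ d_i
    (hμmul : ∀ a b, μ a * μ b = ∑ k, (N a b k : ℂ) * μ k)
    (hbound : ∀ i, ‖μ i‖ ≤ d i)
    (a b : Fin m) (ωa ωb : ℂ)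
    (hωa : ‖ωa‖ = 1) (hωb : ‖ωb‖ = 1)
    (hμa : μ a = (d a : ℂ) * ωa) (hμb : μ b = (d b : ℂ) * ωb) :
    ∀ p, 0 < N a b p → μ p = ωa * ωb * (d p : ℂ) := by
  intro p hp
  have hsum : ∑ k, (N a b k : ℂ) * μ k = ωa * ωb * ∑ k, (N a b k : ℂ) * d k :=
    calc ∑ k, (N a b k : ℂ) * μ k = μ a * μ b := (hμmul a b).symm
      _ = ωa * ωb * ((d a * d b : ℝ) : ℂ) := by rw [hμa, hμb]; push_cast; ring
      _ = ωa * ωb * ∑ k, (N a b k : ℂ) * d k := by rw [hdmul]; push_cast; rfl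
  exact Complex.eq_mul_of_sum_eq_mul_sum_of_norm_le (by simp [hωa, hωb])
    (fun k _ => hnneg a b k) (fun k _ => hbound k) hsum (Finset.mem_univ p) hp

/-- in an abelian real-nonnegative hypergroup, if a character `μ`
satisfies `μ(x_a) = d_a ω_a` and `μ(x_b) = d_b ω_b` with `|ω_a| = |ω_b| = 1`,
then `μ(x_p) = ω_a ω_b d_p` for every constituent `x_p` of `x_a x_b`. -/
theorem character_on_constituents {m : ℕ} [NeZero m]
    (N : Fin m → Fin m → Fin m → ℝ) (st : Fin m → Fin m)
    (d : Fin m → ℝ) (μ : Fin m → ℂ)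
    (hcomm : ∀ i j k, N i j k = N j i k)
    (hassoc : ∀ i j k l, ∑ p, N i j p * N p k l = ∑ q, N j k q * N i q l)
    (hunit : ∀ i k, N 0 i k = if k = i then 1 else 0)
    (hst : ∀ i, st (st i) = i)
    (hnneg : ∀ i j k, 0 ≤ N i j k)
    (hN1pos : ∀ i, 0 < N i (st i) 0)
    (hN0 : ∀ i j, j ≠ st i → N i j 0 = 0)
    -- FPdim, the character positive on the basis
    (hd0 : d 0 = 1)
    (hdpos : ∀ i, 0 < d i)
    (hdmul : ∀ a b, d a * d b = ∑ k, N a b k * d k)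
    -- μ is a character and satisfies the Frobenius–Perron bound |μ(x_i)| ≤ d_i
    (hμ0 : μ 0 = 1)
    (hμmul : ∀ a b, μ a * μ b = ∑ k, (N a b k : ℂ) * μ k)
    (hbound : ∀ i, ‖μ i‖ ≤ d i)
    (a b : Fin m) (ωa ωb : ℂ)
    (hωa : ‖ωa‖ = 1) (hωb : ‖ωb‖ = 1)
    (hμa : μ a = (d a : ℂ) * ωa) (hμb : μ b = (d b : ℂ) * ωb) :
    ∀ p, 0 < N a b p → μ p = ωa * ωb * (d p : ℂ) :=
  character_on_constituents_general N d μ hnneg hdmul hμmul hbound a b ωa ωb hωa hωb hμa hμb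
end

section
/- Let (H, B) be an abelian real-nonnegative hypergroup with characters B̂ = {μ_1, ..., μ_m}, where the dual multiplication is defined by (μ_j ⋆ μ_k)(x_i/d_i) = μ_j(x_i/d_i)·μ_k(x_i/d_i) extended linearly. If μ_j and μ_k are characters with |μ_j(x_i)| = |μ_k(x_i)| = d_i for all i (i.e., grouplike elements of the dual), then μ_j ⋆ μ_k is again an algebra character of H satisfying |(μ_j ⋆ μ_k)(x_i)| = d_i for all i. Hence the grouplike elements of the dual form a group. -/
open scoped BigOperators RealInnerProductSpace

/-!
Write `φ i = μ i / d i` for a grouplike character `μ`, so that `‖φ i‖ = 1`. Dividing the character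
identity `μ a μ b = ∑ₖ N a b k μ k` by `d a d b` exhibits `φ a φ b` as a convex combination of the
`φ k`, with weights `N a b k d k / (d a d b)`. A unit vector is an extreme point of the unit ball,
so `φ k = φ a φ b` whenever `N a b k ≠ 0`. With `ψ i = ν i / d i` likewise, `μ ⋆ ν = d φ ψ` then
satisfies the character identity because `d` does.
-/

theorem eq_of_sum_smul_eq_of_norm_le_one {E ι : Type*} [NormedAddCommGroup E]
    [InnerProductSpace ℝ E] {s : Finset ι} {w : ι → ℝ} {z : ι → E} {u : E}
    (hw : ∀ j ∈ s, 0 ≤ w j) (hw1 : ∑ j ∈ s, w j = 1) (hz : ∀ j ∈ s, ‖z j‖ ≤ 1)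
    (hu : ‖u‖ = 1) (hsum : ∑ j ∈ s, w j • z j = u) {i : ι} (hi : i ∈ s) (hwi : w i ≠ 0) :
    z i = u := by
  have hinner : ∀ j ∈ s, ⟪u, z j⟫ ≤ 1 := fun j hj =>
    (real_inner_le_norm u (z j)).trans (by rw [hu, one_mul]; exact hz j hj)
  have hdefect : ∑ j ∈ s, w j * (1 - ⟪u, z j⟫) = 0 := by
    simp only [mul_sub, mul_one, Finset.sum_sub_distrib, hw1, ← inner_smul_right,
      ← inner_sum, hsum, real_inner_self_eq_norm_sq, hu]
    norm_num
  have hui : ⟪u, z i⟫ = 1 := by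
    have := (Finset.sum_eq_zero_iff_of_nonneg fun j hj =>
      mul_nonneg (hw j hj) (sub_nonneg.2 (hinner j hj))).1 hdefect i hi
    linarith [(mul_eq_zero.1 this).resolve_left hwi]
  have hdist : ‖z i - u‖ ^ 2 ≤ 0 := by
    rw [norm_sub_sq_real, real_inner_comm, hui, hu]
    nlinarith [hz i hi, norm_nonneg (z i)]
  exact sub_eq_zero.1 (norm_eq_zero.1 (pow_eq_zero_iff two_ne_zero |>.1
    (le_antisymm hdist (sq_nonneg _))))

section Grouplike

variable {ι : Type*} {N : ι → ι → ι → ℝ} {d : ι → ℝ} {μ : ι → ℂ}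

theorem norm_div_eq_one_of_norm_eq (hdpos : ∀ i, 0 < d i) (hμg : ∀ i, ‖μ i‖ = d i) (i : ι) :
    ‖μ i / d i‖ = 1 := by
  rw [norm_div, hμg, Complex.norm_real, Real.norm_of_nonneg (hdpos i).le, div_self (hdpos i).ne']

theorem div_eq_div_mul_div_of_grouplike [Fintype ι] (hnneg : ∀ i j k, 0 ≤ N i j k)
    (hdpos : ∀ i, 0 < d i) (hdmul : ∀ a b, d a * d b = ∑ k, N a b k * d k)
    (hμmul : ∀ a b, μ a * μ b = ∑ k, (N a b k : ℂ) * μ k) (hμg : ∀ i, ‖μ i‖ = d i)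
    {a b k : ι} (hk : N a b k ≠ 0) :
    μ k / d k = μ a / d a * (μ b / d b) := by
  have hdab : 0 < d a * d b := mul_pos (hdpos a) (hdpos b)
  have hd : ∀ i, (d i : ℂ) ≠ 0 := fun i => Complex.ofReal_ne_zero.2 (hdpos i).ne'
  refine eq_of_sum_smul_eq_of_norm_le_one (w := fun k => N a b k * d k / (d a * d b))
    (fun k _ => div_nonneg (mul_nonneg (hnneg a b k) (hdpos k).le) hdab.le) ?_
    (fun k _ => (norm_div_eq_one_of_norm_eq hdpos hμg k).le) ?_ ?_ (Finset.mem_univ k)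
    (div_ne_zero (mul_ne_zero hk (hdpos k).ne') hdab.ne')
  · rw [← Finset.sum_div, ← hdmul, div_self hdab.ne']
  · rw [norm_mul, norm_div_eq_one_of_norm_eq hdpos hμg, norm_div_eq_one_of_norm_eq hdpos hμg,
      one_mul]
  · have hterm : ∀ k, (N a b k * d k / (d a * d b)) • (μ k / d k) =
        (N a b k : ℂ) * μ k / (d a * d b) := fun k => by
      rw [Complex.real_smul]
      push_cast
      field_simp [hd k]
    simp only [hterm, ← Finset.sum_div, ← hμmul]
    field_simp

end Grouplike

theorem dual_grouplikes_closed_under_mul_general {m : ℕ} [NeZero m]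
    (N : Fin m → Fin m → Fin m → ℝ)
    (d : Fin m → ℝ) (μ ν : Fin m → ℂ)
    (hnneg : ∀ i j k, 0 ≤ N i j k)
    (hd0 : d 0 = 1)
    (hdpos : ∀ i, 0 < d i)
    (hdmul : ∀ a b, d a * d b = ∑ k, N a b k * d k)
    -- μ, ν are characters
    (hμ0 : μ 0 = 1) (hμmul : ∀ a b, μ a * μ b = ∑ k, (N a b k : ℂ) * μ k)
    (hν0 : ν 0 = 1) (hνmul : ∀ a b, ν a * ν b = ∑ k, (N a b k : ℂ) * ν k)
    -- grouplike elements of the dual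
    (hμg : ∀ i, ‖μ i‖ = d i)
    (hνg : ∀ i, ‖ν i‖ = d i) :
    (fun i => μ i * ν i / (d i : ℂ)) 0 = 1 ∧
    (∀ a b, (μ a * ν a / (d a : ℂ)) * (μ b * ν b / (d b : ℂ)) =
      ∑ k, (N a b k : ℂ) * (μ k * ν k / (d k : ℂ))) ∧
    (∀ i, ‖μ i * ν i / (d i : ℂ)‖ = d i) := by
  have hd : ∀ i, (d i : ℂ) ≠ 0 := fun i => Complex.ofReal_ne_zero.2 (hdpos i).ne'
  refine ⟨by simp [hμ0, hν0, hd0], fun a b => ?_, fun i => ?_⟩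
  · have hterm : ∀ k, (N a b k : ℂ) * (μ k * ν k / d k) =
        (N a b k * d k : ℝ) * (μ a / d a * (μ b / d b) * (ν a / d a * (ν b / d b))) := by
      intro k
      rcases eq_or_ne (N a b k) 0 with hk | hk
      · simp [hk]
      · rw [← div_eq_div_mul_div_of_grouplike hnneg hdpos hdmul hμmul hμg hk,
          ← div_eq_div_mul_div_of_grouplike hnneg hdpos hdmul hνmul hνg hk]
        push_cast
        field_simp [hd k]
    rw [Finset.sum_congr rfl fun k _ => hterm k, ← Finset.sum_mul, ← Complex.ofReal_sum, ← hdmul]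
    push_cast
    field_simp
  · rw [norm_div, norm_mul, hμg, hνg, Complex.norm_real, Real.norm_of_nonneg (hdpos i).le]
    field_simp

/-- in an abelian real-nonnegative hypergroup, if two characters
`μ, ν` satisfy `|μ(x_i)| = |ν(x_i)| = d_i` for all `i` (i.e. they are grouplike
elements of the dual hypergroup), then their dual product
`(μ ⋆ ν)(x_i) = μ(x_i) ν(x_i) / d_i` is again an algebra character of `H`
with `|(μ ⋆ ν)(x_i)| = d_i` for all `i`. Hence the grouplike elements of the
dual form a group. -/
theorem dual_grouplikes_closed_under_mul {m : ℕ} [NeZero m]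
    (N : Fin m → Fin m → Fin m → ℝ) (st : Fin m → Fin m)
    (d : Fin m → ℝ) (μ ν : Fin m → ℂ)
    (hcomm : ∀ i j k, N i j k = N j i k)
    (hassoc : ∀ i j k l, ∑ p, N i j p * N p k l = ∑ q, N j k q * N i q l)
    (hunit : ∀ i k, N 0 i k = if k = i then 1 else 0)
    (hst : ∀ i, st (st i) = i)
    (hnneg : ∀ i j k, 0 ≤ N i j k)
    (hN1pos : ∀ i, 0 < N i (st i) 0)
    (hN0 : ∀ i j, j ≠ st i → N i j 0 = 0)
    (hd0 : d 0 = 1)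
    (hdpos : ∀ i, 0 < d i)
    (hdmul : ∀ a b, d a * d b = ∑ k, N a b k * d k)
    -- μ, ν are characters
    (hμ0 : μ 0 = 1) (hμmul : ∀ a b, μ a * μ b = ∑ k, (N a b k : ℂ) * μ k)
    (hν0 : ν 0 = 1) (hνmul : ∀ a b, ν a * ν b = ∑ k, (N a b k : ℂ) * ν k)
    -- grouplike elements of the dual
    (hμg : ∀ i, ‖μ i‖ = d i)
    (hνg : ∀ i, ‖ν i‖ = d i) :
    (fun i => μ i * ν i / (d i : ℂ)) 0 = 1 ∧
    (∀ a b, (μ a * ν a / (d a : ℂ)) * (μ b * ν b / (d b : ℂ)) =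
      ∑ k, (N a b k : ℂ) * (μ k * ν k / (d k : ℂ))) ∧
    (∀ i, ‖μ i * ν i / (d i : ℂ)‖ = d i) :=
  dual_grouplikes_closed_under_mul_general N d μ ν hnneg hd0 hdpos hdmul hμ0 hμmul hν0 hνmul hμg hνg
end

section
/- Let (H, B) be an abelian normalizable hypergroup with characters μ_1, ..., μ_m, normalization character μ_1 with d_i := μ_1(x_i) ≠ 0, and let Ê_i ∈ H* be d_i times the dual basis element of x_i (the primitive idempotents of the dual algebra). Then ∏_{j=1}^m μ_j = ∑_{x_i non-vanishing} det(L_{x_i/d_i}) Ê_i, where the product is in the dual algebra with pointwise multiplication on normalized basis elements, the sum runs over basis elements x_i such that μ_j(x_i) ≠ 0 for all j, and det(L_{x_i/d_i}) is the determinant of left multiplication by x_i/d_i on H. -/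
/-!
Each character `μ_j`, viewed as a row vector, is a left eigenvector of `L_{x_l/d_l}` with
eigenvalue `μ_j(x_l/d_l)`. Distinct characters are linearly independent (Dedekind), so the
character table is invertible and diagonalizes `L_{x_l/d_l}`; its determinant is therefore
`∏_j μ_j(x_l/d_l)`, which vanishes exactly when `x_l` is vanishing.
-/

open scoped BigOperators Classical

open scoped Matrix

namespace StructureConstants

variable {ι K : Type*} [Fintype ι] [Field K] (N : ι → ι → ι → K) (e : ι)

def IsCharacter (χ : ι → K) : Prop :=
  χ e = 1 ∧ ∀ a b, χ a * χ b = ∑ k, N a b k * χ k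

/-- `χ a₁ * ⋯ * χ aₙ = ∑ k, wordCoeff N e [a₁, …, aₙ] k * χ k` for every character `χ`. -/
noncomputable def wordCoeff (w : FreeMonoid ι) : ι → K :=
  w.toList.foldr (fun a v k => ∑ p, N a p k * v p) (Pi.single e 1)

variable {N e}

theorem IsCharacter.lift_eq_wordCoeff_dotProduct {χ : ι → K} (hχ : IsCharacter N e χ)
    (w : FreeMonoid ι) : FreeMonoid.lift χ w = wordCoeff N e w ⬝ᵥ χ := by
  rw [FreeMonoid.lift_apply, wordCoeff]
  induction w.toList with
  | nil => simp [hχ.1]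
  | cons a l ih =>
    rw [List.map_cons, List.prod_cons, ih, List.foldr_cons]
    simp only [dotProduct, Finset.mul_sum, Finset.sum_mul]
    rw [Finset.sum_comm]
    refine Finset.sum_congr rfl fun p _ => ?_
    rw [mul_left_comm, hχ.2, Finset.mul_sum]
    exact Finset.sum_congr rfl fun k _ => by ring

/-- The multiplicative extensions of the characters to the free monoid on `ι` are independent
monoid homomorphisms, and `wordCoeff` makes these extensions linear images of the characters. -/
theorem linearIndependent_of_isCharacter {κ : Type*} {χ : κ → ι → K}
    (hχ : ∀ j, IsCharacter N e (χ j)) (hinj : Function.Injective χ) :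
    LinearIndependent K χ := by
  have hfree : LinearIndependent K fun j => (FreeMonoid.lift (χ j) : FreeMonoid ι → K) :=
    (linearIndependent_monoidHom (FreeMonoid ι) K).comp _ (FreeMonoid.lift.injective.comp hinj)
  have hlift : (fun j => (Matrix.of (wordCoeff N e)).mulVecLin (χ j)) =
      fun j => (FreeMonoid.lift (χ j) : FreeMonoid ι → K) := by
    ext j w
    exact ((hχ j).lift_eq_wordCoeff_dotProduct w).symm
  exact (hlift ▸ hfree).of_comp _

theorem IsCharacter.vecMul_eq_smul {χ : ι → K} (hχ : IsCharacter N e χ) (a : ι) (c : K) :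
    χ ᵥ* Matrix.of (fun k i => N a i k / c) = (χ a / c) • χ := by
  ext i
  simp only [Matrix.vecMul, dotProduct, Matrix.of_apply, Pi.smul_apply, smul_eq_mul]
  rw [div_mul_eq_mul_div, hχ.2, Finset.sum_div]
  exact Finset.sum_congr rfl fun k _ => by ring

end StructureConstants

theorem Matrix.det_eq_prod_of_vecMul_eq_smul {n K : Type*} [Fintype n] [DecidableEq n]
    [Field K] {A : Matrix n n K} {v : n → n → K} (hv : LinearIndependent K v) {c : n → K}
    (h : ∀ j, v j ᵥ* A = c j • v j) : A.det = ∏ j, c j := by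
  set C : Matrix n n K := Matrix.of v
  have hC : IsUnit C.det := (Matrix.isUnit_iff_isUnit_det C).mp
    (Matrix.linearIndependent_rows_iff_isUnit.mp hv)
  have hCA : C * A = Matrix.diagonal c * C := by
    ext j i
    rw [Matrix.mul_apply_eq_vecMul, Matrix.diagonal_mul]
    exact congrFun (h j) i
  have hdet : C.det * A.det = C.det * (Matrix.diagonal c).det := by
    rw [← Matrix.det_mul, hCA, Matrix.det_mul, mul_comm]
  rw [hC.mul_left_cancel hdet, Matrix.det_diagonal]

theorem product_of_all_characters_eq_general {m : ℕ} [NeZero m]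
    (N : Fin m → Fin m → Fin m → ℂ)
    (μ : Fin m → Fin m → ℂ) (d : Fin m → ℂ)
    -- the m distinct characters, a complete family
    (hμ1 : ∀ j, μ j 0 = 1)
    (hμmul : ∀ j a b, μ j a * μ j b = ∑ k, N a b k * μ j k)
    (hμinj : Function.Injective μ) :
    ∀ l, d l * ∏ j, (μ j l / d l) =
      if (∀ j, μ j l ≠ 0) then
        (Matrix.of fun k i => N l i k / d l).det * d l
      else 0 := by
  intro l
  have hchar : ∀ j, StructureConstants.IsCharacter N 0 (μ j) := fun j => ⟨hμ1 j, hμmul j⟩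
  have hdet : (Matrix.of fun k i => N l i k / d l).det = ∏ j, (μ j l / d l) :=
    Matrix.det_eq_prod_of_vecMul_eq_smul
      (StructureConstants.linearIndependent_of_isCharacter hchar hμinj)
      fun j => (hchar j).vecMul_eq_smul l (d l)
  split_ifs with hnonvanishing
  · rw [hdet, mul_comm]
  · obtain ⟨j, hj⟩ := not_forall_not.mp hnonvanishing
    rw [Finset.prod_eq_zero (Finset.mem_univ j) (by rw [hj, zero_div]), mul_zero]

/-- in an abelian normalizable hypergroup with normalization
character `d` (`d_i = μ_1(x_i) ≠ 0`), the product of all characters in the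
dual algebra equals `∑_{x_i non-vanishing} det(L_{x_i/d_i}) Ê_i`, where
`Ê_i = d_i x_i^∘`. Evaluating both sides of this identity in `H*` at each
basis element `x_l` (on which `Ê_i(x_l) = d_i δ_{il}` and the `⋆`-product of
the characters takes the value `d_l ∏_j μ_j(x_l/d_l)`), the identity reads:
for every `l`, `d_l ∏_j μ_j(x_l/d_l)` equals `det(L_{x_l/d_l}) · d_l` if
`μ_j(x_l) ≠ 0` for all `j`, and `0` otherwise. Here `L_{x_l/d_l}` is the
matrix of left multiplication by `x_l/d_l` on `H` in the basis `B`. -/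
theorem product_of_all_characters_eq {m : ℕ} [NeZero m]
    (N : Fin m → Fin m → Fin m → ℂ) (st : Fin m → Fin m)
    (μ : Fin m → Fin m → ℂ) (d : Fin m → ℂ)
    (hcomm : ∀ i j k, N i j k = N j i k)
    (hassoc : ∀ i j k l, ∑ p, N i j p * N p k l = ∑ q, N j k q * N i q l)
    (hunit : ∀ i k, N 0 i k = if k = i then 1 else 0)
    (hst : ∀ i, st (st i) = i)
    (hN1ne : ∀ i, N i (st i) 0 ≠ 0)
    (hN0 : ∀ i j, j ≠ st i → N i j 0 = 0)
    -- d = μ_1 is a normalization character: an algebra character nonvanishing on B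
    (hd0 : d 0 = 1)
    (hdmul : ∀ a b, d a * d b = ∑ k, N a b k * d k)
    (hdne : ∀ i, d i ≠ 0)
    -- the m distinct characters, a complete family
    (hμ1 : ∀ j, μ j 0 = 1)
    (hμmul : ∀ j a b, μ j a * μ j b = ∑ k, N a b k * μ j k)
    (hμinj : Function.Injective μ)
    (hμcomplete : ∀ f : Fin m → ℂ, f 0 = 1 →
      (∀ a b, f a * f b = ∑ k, N a b k * f k) → ∃ j, f = μ j) :
    ∀ l, d l * ∏ j, (μ j l / d l) =
      if (∀ j, μ j l ≠ 0) then
        (Matrix.of fun k i => N l i k / d l).det * d l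
      else 0 :=
  product_of_all_characters_eq_general N μ d hμ1 hμmul hμinj
end

section
/- Let (H, B) be an abelian real-nonnegative hypergroup and g ∈ B a grouplike element. Then g appears with positive coefficient in x_i x_{i*} if and only if g x_i = FPdim(g) x_i. Moreover, the set of grouplike elements appearing in x_i x_{i*} forms a subgroup of the group of grouplike elements. -/
/-! Since `x_{g*} (x_g x_a) = h_g⁻¹ x_a` and all structure constants are nonnegative, `x_g x_a`
is a positive multiple of a single basis element. Frobenius reciprocity
`N_{i,i*}^g / h_g = N_{g*,i}^i / h_i` turns `g ∈ x_i x_{i*}` into `x_g x_i ∈ ℝ_{>0} x_i`, and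
the dimension function pins the scalar down to `FPdim(g)`. For a constituent `k` of `x_g x_{g'}`,
associativity of `(x_g x_{g'}) x_{k*}` shows `k` is grouplike, and that of `(x_g x_{g'}) x_i`
shows `x_k x_i ∈ ℝ_{>0} x_i`. -/

open scoped BigOperators

/-- The basis is `Fin m` with `x_1` at index `0`, `N a b k` is the coefficient of `x_k` in
`x_a x_b`, `st` is the involution and `h a = 1 / N a (st a) 0`. -/
structure IsAbelianHypergroup {m : ℕ} [NeZero m] (N : Fin m → Fin m → Fin m → ℝ)
    (st : Fin m → Fin m) (h : Fin m → ℝ) : Prop where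
  comm : ∀ a b k, N a b k = N b a k
  assoc : ∀ a b k l, ∑ p, N a b p * N p k l = ∑ q, N b k q * N a q l
  unit : ∀ a k, N 0 a k = if k = a then 1 else 0
  star_star : ∀ a, st (st a) = a
  nonneg : ∀ a b k, 0 ≤ N a b k
  h_pos : ∀ a, 0 < h a
  coeff_star_zero : ∀ a, N a (st a) 0 = (h a)⁻¹
  coeff_zero_of_ne_star : ∀ a b, b ≠ st a → N a b 0 = 0

variable {m : ℕ} [NeZero m] {N : Fin m → Fin m → Fin m → ℝ} {st : Fin m → Fin m}
  {h : Fin m → ℝ}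

namespace IsAbelianHypergroup

theorem h_star (H : IsAbelianHypergroup N st h) (a : Fin m) : h (st a) = h a := by
  have h_inv := H.coeff_star_zero (st a)
  rw [H.star_star, H.comm, H.coeff_star_zero] at h_inv
  exact (inv_injective h_inv).symm

theorem coeff_star_zero_pos (H : IsAbelianHypergroup N st h) (a : Fin m) :
    0 < N a (st a) 0 :=
  H.coeff_star_zero a ▸ inv_pos.2 (H.h_pos a)

theorem sum_mul_coeff_zero (H : IsAbelianHypergroup N st h) (f : Fin m → ℝ) (a : Fin m) :
    ∑ q, f q * N a q 0 = f (st a) * (h a)⁻¹ := by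
  rw [Fintype.sum_eq_single (st a) fun q hq => by rw [H.coeff_zero_of_ne_star a q hq, mul_zero],
    H.coeff_star_zero]

/-- Frobenius reciprocity, read off from `(x_a x_b) x_c = x_a (x_b x_c)` at `x_1`. -/
theorem frobenius (H : IsAbelianHypergroup N st h) (a b c : Fin m) :
    N a b (st c) * (h c)⁻¹ = N b c (st a) * (h a)⁻¹ := by
  have hassoc := H.assoc a b c 0
  simp only [H.comm _ c 0] at hassoc
  rwa [H.sum_mul_coeff_zero, H.sum_mul_coeff_zero] at hassoc

theorem coeff_pos_iff_rotate (H : IsAbelianHypergroup N st h) (a b c : Fin m) :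
    0 < N a b (st c) ↔ 0 < N b c (st a) := by
  rw [← mul_pos_iff_of_pos_right (inv_pos.2 (H.h_pos c)), H.frobenius,
    mul_pos_iff_of_pos_right (inv_pos.2 (H.h_pos a))]

theorem isGrouplike_iff (H : IsAbelianHypergroup N st h) (g : Fin m) :
    IsGrouplike N st h g ↔ ∀ l ≠ 0, N g (st g) l = 0 := by
  constructor
  · intro hg l hl
    have hgl := hg l
    rw [if_neg hl] at hgl
    exact (mul_eq_zero.1 hgl).resolve_left (H.h_pos g).ne'
  · intro hg l
    by_cases hl : l = 0
    · rw [hl, if_pos rfl, H.coeff_star_zero, mul_inv_cancel₀ (H.h_pos g).ne']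
    · rw [if_neg hl, hg l hl, mul_zero]

end IsAbelianHypergroup

namespace IsGrouplike

variable {g : Fin m}

theorem star (H : IsAbelianHypergroup N st h) (hg : IsGrouplike N st h g) :
    IsGrouplike N st h (st g) := by
  rw [H.isGrouplike_iff] at hg ⊢
  intro l hl
  rw [H.star_star, H.comm, hg l hl]

/-- `x_{g*} (x_g x_a) = h_g⁻¹ x_a`. -/
theorem sum_coeff_mul_coeff_star (H : IsAbelianHypergroup N st h)
    (hg : IsGrouplike N st h g) (a b : Fin m) :
    ∑ q, N g a q * N (st g) q b = (h g)⁻¹ * if b = a then 1 else 0 := by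
  have hzero : ∀ p ≠ 0, N (st g) g p = 0 := fun p hp => by
    rw [H.comm, (H.isGrouplike_iff g).1 hg p hp]
  rw [← H.assoc, Fintype.sum_eq_single 0 fun p hp => by rw [hzero p hp, zero_mul], H.comm,
    H.coeff_star_zero, H.unit]

theorem coeff_star_eq_zero_of_ne (H : IsAbelianHypergroup N st h)
    (hg : IsGrouplike N st h g) {a q b : Fin m} (hq : 0 < N g a q) (hb : b ≠ a) :
    N (st g) q b = 0 := by
  have hsum := hg.sum_coeff_mul_coeff_star H a b
  rw [if_neg hb, mul_zero,
    Fintype.sum_eq_zero_iff_of_nonneg fun r => mul_nonneg (H.nonneg _ _ _) (H.nonneg _ _ _)]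
    at hsum
  exact (mul_eq_zero.1 (congrFun hsum q)).resolve_left hq.ne'

theorem coeff_star_pos_of_pos (H : IsAbelianHypergroup N st h)
    (hg : IsGrouplike N st h g) {a q : Fin m} (hq : 0 < N g a q) : 0 < N (st g) q a := by
  have hsum := (hg.star H).sum_coeff_mul_coeff_star H q q
  rw [H.star_star, H.h_star, if_pos rfl, mul_one] at hsum
  obtain ⟨r, -, hr⟩ := Finset.exists_ne_zero_of_sum_ne_zero
    (hsum ▸ (inv_pos.2 (H.h_pos g)).ne')
  have hr' : N (st g) q r ≠ 0 := left_ne_zero_of_mul hr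
  obtain rfl : r = a := by
    by_contra hra
    exact hr' (hg.coeff_star_eq_zero_of_ne H hq hra)
  exact (H.nonneg _ _ _).lt_of_ne' hr'

theorem coeff_star_pos_iff (H : IsAbelianHypergroup N st h)
    (hg : IsGrouplike N st h g) {a q : Fin m} : 0 < N (st g) q a ↔ 0 < N g a q := by
  refine ⟨fun hq => ?_, hg.coeff_star_pos_of_pos H⟩
  simpa only [H.star_star] using (hg.star H).coeff_star_pos_of_pos H hq

theorem eq_of_coeff_pos (H : IsAbelianHypergroup N st h)
    (hg : IsGrouplike N st h g) {a q q' : Fin m} (hq : 0 < N g a q) (hq' : 0 < N g a q') :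
    q = q' := by
  by_contra hne
  have hzero := (hg.star H).coeff_star_eq_zero_of_ne H
    ((hg.coeff_star_pos_iff H).2 hq') hne
  rw [H.star_star] at hzero
  exact hq.ne' hzero

theorem coeff_eq_zero_of_ne (H : IsAbelianHypergroup N st h)
    (hg : IsGrouplike N st h g) {a q k : Fin m} (hq : 0 < N g a q) (hk : k ≠ q) :
    N g a k = 0 :=
  ((H.nonneg g a k).eq_or_lt.resolve_right fun hk' => hk (hg.eq_of_coeff_pos H hk' hq)).symm

theorem sum_coeff_mul_eq (H : IsAbelianHypergroup N st h)
    (hg : IsGrouplike N st h g) {a q : Fin m} (hq : 0 < N g a q) (f : Fin m → ℝ) :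
    ∑ k, N g a k * f k = N g a q * f q :=
  Fintype.sum_eq_single q fun k hk => by rw [hg.coeff_eq_zero_of_ne H hq hk, zero_mul]

theorem coeff_self_eq_dim (H : IsAbelianHypergroup N st h) (hg : IsGrouplike N st h g)
    {d : Fin m → ℝ} (hdmul : ∀ a b, d a * d b = ∑ k, N a b k * d k) {a : Fin m}
    (hda : d a ≠ 0) (ha : 0 < N g a a) : N g a a = d g := by
  have hprod := hdmul g a
  rw [hg.sum_coeff_mul_eq H ha] at hprod
  exact (mul_right_cancel₀ hda hprod).symm

theorem coeff_self_pos_iff (H : IsAbelianHypergroup N st h)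
    (hg : IsGrouplike N st h g) (i : Fin m) : 0 < N i (st i) g ↔ 0 < N g i i := by
  have hrot := H.coeff_pos_iff_rotate (st g) i (st i)
  rw [H.star_star, H.star_star, hg.coeff_star_pos_iff H] at hrot
  exact hrot.symm

theorem mul_eq_dim_smul_iff (H : IsAbelianHypergroup N st h) (hg : IsGrouplike N st h g)
    {d : Fin m → ℝ} (hdpos : ∀ a, 0 < d a) (hdmul : ∀ a b, d a * d b = ∑ k, N a b k * d k)
    (a : Fin m) : (∀ k, N g a k = if k = a then d g else 0) ↔ 0 < N g a a := by
  constructor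
  · intro hga
    rw [hga a, if_pos rfl]
    exact hdpos g
  · intro ha k
    split_ifs with hk
    · subst hk
      exact hg.coeff_self_eq_dim H hdmul (hdpos k).ne' ha
    · exact hg.coeff_eq_zero_of_ne H ha hk

theorem of_coeff_mul_pos (H : IsAbelianHypergroup N st h) {g' k : Fin m}
    (hg : IsGrouplike N st h g) (hg' : IsGrouplike N st h g') (hk : 0 < N g g' k) :
    IsGrouplike N st h k := by
  have hk' : 0 < N g' (st k) (st g) := by
    rwa [← H.coeff_pos_iff_rotate, H.star_star]
  rw [H.isGrouplike_iff]
  intro l hl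
  have hassoc := H.assoc g g' (st k) l
  rw [hg.sum_coeff_mul_eq H hk, hg'.sum_coeff_mul_eq H hk',
    (H.isGrouplike_iff g).1 hg l hl, mul_zero] at hassoc
  exact (mul_eq_zero.1 hassoc).resolve_left hk.ne'

theorem coeff_self_pos_of_coeff_mul_pos (H : IsAbelianHypergroup N st h)
    (hg : IsGrouplike N st h g) {g' k a : Fin m} (hga : 0 < N g a a) (hg'a : 0 < N g' a a)
    (hk : 0 < N g g' k) : 0 < N k a a := by
  have hassoc := H.assoc g g' a a
  rw [hg.sum_coeff_mul_eq H hk] at hassoc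
  have hrhs : 0 < ∑ q, N g' a q * N g q a :=
    (mul_pos hg'a hga).trans_le <| Finset.single_le_sum (f := fun q => N g' a q * N g q a)
      (fun q _ => mul_nonneg (H.nonneg _ _ _) (H.nonneg _ _ _)) (Finset.mem_univ a)
  exact pos_of_mul_pos_right (hassoc ▸ hrhs) (H.nonneg g g' k)

end IsGrouplike

theorem grouplike_constituents_of_x_xstar_general {m : ℕ} [NeZero m]
    (N : Fin m → Fin m → Fin m → ℝ) (st : Fin m → Fin m)
    (h : Fin m → ℝ) (d : Fin m → ℝ) (i : Fin m)
    (hcomm : ∀ a b k, N a b k = N b a k)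
    (hassoc : ∀ a b k l, ∑ p, N a b p * N p k l = ∑ q, N b k q * N a q l)
    (hunit : ∀ a k, N 0 a k = if k = a then 1 else 0)
    (hst : ∀ a, st (st a) = a)
    (hnneg : ∀ a b k, 0 ≤ N a b k)
    (hpos : ∀ a, 0 < h a)
    (hN1 : ∀ a, N a (st a) 0 = (h a)⁻¹)
    (hN0 : ∀ a b, b ≠ st a → N a b 0 = 0)
    (hdpos : ∀ a, 0 < d a)
    (hdmul : ∀ a b, d a * d b = ∑ k, N a b k * d k) :
    (∀ g, IsGrouplike N st h g →
      (0 < N i (st i) g ↔ ∀ k, N g i k = if k = i then d g else 0)) ∧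
    (0 < N i (st i) 0) ∧
    (∀ g, IsGrouplike N st h g → 0 < N i (st i) g →
      IsGrouplike N st h (st g) ∧ 0 < N i (st i) (st g)) ∧
    (∀ g g', IsGrouplike N st h g → IsGrouplike N st h g' →
      0 < N i (st i) g → 0 < N i (st i) g' →
      ∀ k, 0 < N g g' k → IsGrouplike N st h k ∧ 0 < N i (st i) k) := by
  have H : IsAbelianHypergroup N st h := ⟨hcomm, hassoc, hunit, hst, hnneg, hpos, hN1, hN0⟩
  refine ⟨fun g hg => ?_, H.coeff_star_zero_pos i, fun g hg hgi => ?_,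
    fun g g' hg hg' hgi hg'i k hk => ?_⟩
  · rw [hg.mul_eq_dim_smul_iff H hdpos hdmul, hg.coeff_self_pos_iff H]
  · rw [(hg.star H).coeff_self_pos_iff H, hg.coeff_star_pos_iff H, ← hg.coeff_self_pos_iff H]
    exact ⟨hg.star H, hgi⟩
  · have hk' := hg.of_coeff_mul_pos H hg' hk
    rw [hg.coeff_self_pos_iff H] at hgi
    rw [hg'.coeff_self_pos_iff H] at hg'i
    exact ⟨hk', (hk'.coeff_self_pos_iff H i).2
      (hg.coeff_self_pos_of_coeff_mul_pos H hgi hg'i hk)⟩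

/-- in an abelian real-nonnegative hypergroup, a grouplike
element `g` appears with positive coefficient in `x_i x_{i*}` iff
`g x_i = FPdim(g) x_i`; moreover the grouplike constituents of `x_i x_{i*}`
form a subgroup of the group of grouplike elements (they contain the unit, are
closed under the involution, and the basis element carrying the product of two
of them is again one of them). -/
theorem grouplike_constituents_of_x_xstar {m : ℕ} [NeZero m]
    (N : Fin m → Fin m → Fin m → ℝ) (st : Fin m → Fin m)
    (h : Fin m → ℝ) (d : Fin m → ℝ) (i : Fin m)
    (hcomm : ∀ a b k, N a b k = N b a k)
    (hassoc : ∀ a b k l, ∑ p, N a b p * N p k l = ∑ q, N b k q * N a q l)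
    (hunit : ∀ a k, N 0 a k = if k = a then 1 else 0)
    (hst : ∀ a, st (st a) = a)
    (hnneg : ∀ a b k, 0 ≤ N a b k)
    (hpos : ∀ a, 0 < h a)
    (hN1 : ∀ a, N a (st a) 0 = (h a)⁻¹)
    (hN0 : ∀ a b, b ≠ st a → N a b 0 = 0)
    (hd0 : d 0 = 1)
    (hdpos : ∀ a, 0 < d a)
    (hdmul : ∀ a b, d a * d b = ∑ k, N a b k * d k) :
    (∀ g, IsGrouplike N st h g →
      (0 < N i (st i) g ↔ ∀ k, N g i k = if k = i then d g else 0)) ∧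
    (0 < N i (st i) 0) ∧
    (∀ g, IsGrouplike N st h g → 0 < N i (st i) g →
      IsGrouplike N st h (st g) ∧ 0 < N i (st i) (st g)) ∧
    (∀ g g', IsGrouplike N st h g → IsGrouplike N st h g' →
      0 < N i (st i) g → 0 < N i (st i) g' →
      ∀ k, 0 < N g g' k → IsGrouplike N st h k ∧ 0 < N i (st i) k) :=
  grouplike_constituents_of_x_xstar_general N st h d i hcomm hassoc hunit hst hnneg hpos hN1 hN0
    hdpos hdmul
end
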